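/- Let ℓ ≥ 1, m = ⌈log_t ℓ⌉, and ℓ₁ = ℓ − ⌊(t^m − ℓ)/(t−1)⌋. Then any t-ary tree achieving minimal path length among trees with ℓ leaves has profile D_j = t^j for 0 ≤ j ≤ m−1, D_m = ℓ₁, and D_j = 0 for j > m; in particular all its leaves are at depth m or m−1. -/

import Mathlib

/-- A `t`-ary tree: either empty, or a root node with `t` ordered subtrees. -/
inductive TAry (t : ℕ) : Type where
  | nil : TAry t
  | node : (Fin t → TAry t) → TAry t

namespace TAry

variable {t : ℕ}

/-- Number of nodes of a `t`-ary tree. -/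
def size : TAry t → ℕ
  | nil => 0
  | node c => 1 + ∑ i, (c i).size

/-- Sum over nodes of `d +` (depth of the node). -/
def plFrom : TAry t → ℕ → ℕ
  | nil, _ => 0
  | node c, d => d + ∑ i, (c i).plFrom (d + 1)

/-- Path length: the sum of the depths of all nodes. -/
def pathLength (T : TAry t) : ℕ := T.plFrom 0

/-- Number of nodes at depth `j` (the profile `D_j`). -/
def depthCount : ℕ → TAry t → ℕ
  | _, nil => 0
  | 0, node _ => 1
  | j + 1, node c => ∑ i, depthCount j (c i)

/-- Number of leaves (nodes all of whose subtrees are empty). -/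
def leaves : TAry t → ℕ
  | nil => 0
  | node c => max 1 (∑ i, (c i).leaves)

end TAry

namespace TAry
variable {t : ℕ}

/-- Every internal (non-leaf) node has exactly one child. -/
def chain : TAry t → Prop
  | nil => True
  | node c => (∀ i, c i = nil) ∨ ∃ i, c i ≠ nil ∧ chain (c i) ∧ ∀ j, j ≠ i → c j = nil

/-- Number of leaves at depth `j`. -/
def leavesAt : ℕ → TAry t → ℕ
  | _, nil => 0
  | 0, node c => if (∑ i, (c i).size) = 0 then 1 else 0
  | j + 1, node c => ∑ i, leavesAt j (c i)

/-- The subtree of `T` at position `pos` (empty tree if the position is invalid). -/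
def getAt : TAry t → List (Fin t) → TAry t
  | T, [] => T
  | nil, _ :: _ => nil
  | node c, i :: rest => getAt (c i) rest

/-- Replace the subtree of `T` at position `pos` by `τ`. -/
def replaceAt : TAry t → List (Fin t) → TAry t → TAry t
  | _, [], τ => τ
  | nil, _ :: _, _ => nil
  | node c, i :: rest, τ => node (fun j => if j = i then replaceAt (c i) rest τ else c j)

/-- Attach the trees `τs i` at the positions `pos i`, for `i = 0, …, ℓ-1`. -/
def attachAll {ℓ : ℕ} (T : TAry t) (pos : Fin ℓ → List (Fin t)) (τs : Fin ℓ → TAry t) :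
    TAry t :=
  (List.finRange ℓ).foldl (fun A i => replaceAt A (pos i) (τs i)) T

end TAry

/-- The binary entropy function (natural logarithm). -/
noncomputable def binEnt (x : ℝ) : ℝ := -x * Real.log x - (1 - x) * Real.log (1 - x)

/-- Number of `t`-ary trees with exactly `n` nodes. -/
noncomputable def Ct (t n : ℕ) : ℕ := Nat.card {T : TAry t // T.size = n}

/-- Number of `t`-ary trees with path length exactly `p`. -/
noncomputable def Tt (t p : ℕ) : ℕ := Nat.card {T : TAry t // T.pathLength = p}

/-! Write `d_j(T)` for the number of nodes at depth at least `j`, so that the path length is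
`∑_{j ≥ 1} d_j(T)`. Counting leaves level by level gives the Kraft-type bound
`t ℓ ≤ t ^ j + (t - 1) d_j(T)` for a tree with `ℓ` leaves; with `m = ⌈log_t ℓ⌉` and
`ℓ₁ = ⌈(t ℓ - t ^ m) / (t - 1)⌉` this reads `d_j(T) ≥ ℓ₁ + t ^ j + ⋯ + t ^ (m - 1)` for `j ≤ m`.
The tree that is complete down to depth `m - 1` and carries `ℓ₁` nodes at depth `m` has `ℓ` leaves
and attains every one of these bounds, so a tree of minimal path length attains them as well, and
therefore has the same profile. -/

namespace Nat

theorem sum_range_map_min_sub_mul (g : ℕ → ℕ) (c : ℕ) (h0 : g 0 = 0)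
    (hadd : ∀ y, g (c + y) = g c + g y) {n x : ℕ} (hx : x ≤ n * c) :
    ∑ i ∈ Finset.range n, g (min c (x - i * c)) = g x := by
  induction n generalizing x with
  | zero => simp_all
  | succ n ih =>
    have hshift : ∀ i, x - (i + 1) * c = x - c - i * c := fun i => by
      rw [add_mul, one_mul, add_comm, Nat.sub_add_eq]
    rw [Finset.sum_range_succ', Finset.sum_congr rfl fun i _ => by rw [hshift],
      ih (by rw [add_mul, one_mul] at hx; omega)]
    rcases le_total c x with hcx | hxc
    · rw [zero_mul, Nat.sub_zero, min_eq_left hcx, add_comm, ← hadd, Nat.add_sub_cancel' hcx]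
    · rw [zero_mul, Nat.sub_zero, min_eq_right hxc, Nat.sub_eq_zero_of_le hxc, h0, zero_add]

theorem sub_one_mul_sum_Ico_pow_add_pow {t j m : ℕ} (ht : 1 ≤ t) (hjm : j ≤ m) :
    (t - 1) * ∑ i ∈ Finset.Ico j m, t ^ i + t ^ j = t ^ m := by
  zify [ht]
  linear_combination geom_sum_Ico_mul (t : ℤ) hjm

theorem exists_sub_one_mul_add_pow_clog_eq {t ℓ : ℕ} (ht : 2 ≤ t) (hℓ : 1 ≤ ℓ) :
    ∃ r < t - 1, (t - 1) * (ℓ - (t ^ clog t ℓ - ℓ) / (t - 1)) + t ^ clog t ℓ = t * ℓ + r := by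
  set m := clog t ℓ
  have hpow_le : t ^ m ≤ t * ℓ := by
    rcases hℓ.eq_or_lt with rfl | hℓ2
    · simp only [m, clog_one_right, pow_zero, mul_one]
      omega
    · have hm : m = (m - 1) + 1 := (Nat.succ_pred_eq_of_pos (clog_pos ht hℓ2)).symm
      rw [hm, pow_succ']
      exact Nat.mul_le_mul_left t (pow_pred_clog_lt_self ht hℓ2).le
  have hℓm : ℓ ≤ t ^ m := le_pow_clog ht ℓ
  refine ⟨(t ^ m - ℓ) % (t - 1), Nat.mod_lt _ (by omega), ?_⟩
  set k := (t ^ m - ℓ) / (t - 1)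
  have hdiv : (t - 1) * k + (t ^ m - ℓ) % (t - 1) = t ^ m - ℓ := Nat.div_add_mod _ _
  have htℓ : (t - 1) * ℓ + ℓ = t * ℓ := by
    rw [← Nat.succ_mul, Nat.succ_eq_add_one, Nat.sub_add_cancel (by omega)]
  have hkℓ : (t - 1) * k ≤ (t - 1) * ℓ := by omega
  rw [Nat.mul_sub]
  omega

end Nat

theorem Fin.sum_min_sub_mul {n c x : ℕ} (hx : x ≤ n * c) :
    ∑ i : Fin n, min c (x - (i : ℕ) * c) = x := by
  rw [Fin.sum_univ_eq_sum_range (fun i => min c (x - i * c))]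
  exact Nat.sum_range_map_min_sub_mul id c rfl (fun _ => rfl) hx

namespace TAry

variable {t : ℕ}

theorem plFrom_eq_pathLength_add (T : TAry t) (d : ℕ) :
    T.plFrom d = T.pathLength + d * T.size := by
  induction T generalizing d with
  | nil => simp [plFrom, pathLength, size]
  | node c ih =>
    rw [pathLength]
    simp only [plFrom, size, ih, Finset.sum_add_distrib, ← Finset.mul_sum]
    ring

theorem pathLength_node (c : Fin t → TAry t) :
    (node c).pathLength = ∑ i, ((c i).pathLength + (c i).size) := by
  rw [pathLength, plFrom]
  simp [plFrom_eq_pathLength_add]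

theorem depthCount_zero_of_ne_nil {T : TAry t} (hT : T ≠ nil) : depthCount 0 T = 1 := by
  cases T with
  | nil => exact absurd rfl hT
  | node c => rfl

theorem ne_nil_of_leaves_pos {T : TAry t} (hT : 0 < T.leaves) : T ≠ nil := by
  rintro rfl
  simp [leaves] at hT

def depthCountGe : ℕ → TAry t → ℕ
  | _, nil => 0
  | 0, node c => 1 + ∑ i, (c i).size
  | j + 1, node c => ∑ i, depthCountGe j (c i)

theorem depthCountGe_zero (T : TAry t) : depthCountGe 0 T = T.size := by
  cases T <;> rfl

theorem depthCountGe_eq_add (T : TAry t) (j : ℕ) :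
    depthCountGe j T = depthCount j T + depthCountGe (j + 1) T := by
  induction T generalizing j with
  | nil => cases j <;> rfl
  | node c ih =>
    cases j with
    | zero => simp only [depthCountGe, depthCount, depthCountGe_zero]
    | succ j =>
      simp only [depthCountGe, depthCount]
      rw [Finset.sum_congr rfl fun i _ => ih i j, Finset.sum_add_distrib]

theorem depthCount_le_depthCountGe (T : TAry t) (j : ℕ) : depthCount j T ≤ depthCountGe j T := by
  rw [depthCountGe_eq_add]
  exact Nat.le_add_right _ _

theorem depthCountGe_eq_sum_Ico_add (T : TAry t) {j N : ℕ} (hjN : j ≤ N) :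
    depthCountGe j T = ∑ i ∈ Finset.Ico j N, depthCount i T + depthCountGe N T := by
  induction N, hjN using Nat.le_induction with
  | base => simp
  | succ N hjN ih => rw [ih, depthCountGe_eq_add T N, Finset.sum_Ico_succ_top hjN, add_assoc]

theorem depthCountGe_eq_zero_of_depthCount_eq_zero {T : TAry t} {j : ℕ}
    (h : depthCount j T = 0) : depthCountGe j T = 0 := by
  induction T generalizing j with
  | nil => cases j <;> rfl
  | node c ih =>
    cases j with
    | zero => simp [depthCount] at h
    | succ j =>
      simp only [depthCount, Finset.sum_eq_zero_iff, Finset.mem_univ, true_implies] at h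
      exact Finset.sum_eq_zero fun i _ => ih i (h i)

theorem depthCountGe_eq_zero_of_size_le {T : TAry t} {j : ℕ} (h : T.size ≤ j) :
    depthCountGe j T = 0 := by
  induction T generalizing j with
  | nil => cases j <;> rfl
  | node c ih =>
    cases j with
    | zero => simp [size] at h
    | succ j =>
      refine Finset.sum_eq_zero fun i _ => ih i ?_
      have := Finset.single_le_sum (fun i _ => Nat.zero_le ((c i).size)) (Finset.mem_univ i)
      simp only [size] at h
      omega

theorem pathLength_eq_sum_depthCountGe {T : TAry t} {N : ℕ} (hN : depthCountGe N T = 0) :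
    T.pathLength = ∑ j ∈ Finset.range N, depthCountGe (j + 1) T := by
  induction T generalizing N with
  | nil => simp [pathLength, plFrom, depthCountGe]
  | node c ih =>
    cases N with
    | zero => simp [depthCountGe] at hN
    | succ N =>
      simp only [depthCountGe, Finset.sum_eq_zero_iff, Finset.mem_univ, true_implies] at hN
      simp only [pathLength_node, depthCountGe]
      rw [Finset.sum_comm]
      refine Finset.sum_congr rfl fun i _ => ?_
      rw [Finset.sum_range_succ', ih i (hN i), depthCountGe_zero]

theorem mul_leaves_le (T : TAry t) (j : ℕ) :
    t * T.leaves ≤ t ^ j + (t - 1) * depthCountGe j T := by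
  induction T generalizing j with
  | nil => simp [leaves, depthCountGe]
  | node c ih =>
    have hsum : ∀ j, t * ∑ i, (c i).leaves ≤ t * t ^ j + (t - 1) * ∑ i, depthCountGe j (c i) :=
      fun j => by
        rw [Finset.mul_sum, Finset.mul_sum]
        refine (Finset.sum_le_sum fun i _ => ih i j).trans_eq ?_
        simp [Finset.sum_add_distrib]
    have hmax : ∀ {B : ℕ}, t ≤ B → t * ∑ i, (c i).leaves ≤ B → t * (node c).leaves ≤ B := by
      intro B h1 h2
      rcases le_total 1 (∑ i, (c i).leaves) with h | h
      · rwa [leaves, max_eq_right h]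
      · rwa [leaves, max_eq_left h, mul_one]
    cases j with
    | zero =>
      have := hsum 0
      simp only [pow_zero, mul_one, depthCountGe_zero] at this
      simp only [depthCountGe, pow_zero, Nat.mul_add]
      exact hmax (by omega) (by omega)
    | succ j =>
      simp only [depthCountGe]
      exact hmax ((Nat.le_self_pow j.succ_ne_zero t).trans (Nat.le_add_right _ _))
        (by rw [pow_succ']; exact hsum j)

theorem depthCount_zero_le_one (T : TAry t) : depthCount 0 T ≤ 1 := by
  cases T <;> simp [depthCount]

theorem depthCount_succ_add_mul_leavesAt_le (T : TAry t) (j : ℕ) :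
    depthCount (j + 1) T + t * leavesAt j T ≤ t * depthCount j T := by
  induction T generalizing j with
  | nil => simp [depthCount, leavesAt]
  | node c ih =>
    cases j with
    | zero =>
      simp only [depthCount, leavesAt]
      split_ifs with hsize
      · have hle : ∀ i, depthCount 0 (c i) ≤ (c i).size := fun i => by
          simpa [depthCountGe_zero] using depthCount_le_depthCountGe (c i) 0
        have := Finset.sum_le_sum fun i (_ : i ∈ Finset.univ) => hle i
        omega
      · simpa using Finset.sum_le_sum fun i (_ : i ∈ Finset.univ) => depthCount_zero_le_one (c i)
    | succ j =>
      simp only [depthCount, leavesAt, Finset.mul_sum, ← Finset.sum_add_distrib]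
      exact Finset.sum_le_sum fun i _ => ih i j

theorem leavesAt_eq_zero_of_mul_depthCount_le (ht : 0 < t) {T : TAry t} {j : ℕ}
    (h : t * depthCount j T ≤ depthCount (j + 1) T) : leavesAt j T = 0 := by
  have := depthCount_succ_add_mul_leavesAt_le T j
  have : t * leavesAt j T = 0 := by omega
  simpa [ht.ne'] using this

theorem depthCount_eq_of_depthCountGe_le {S T : TAry t} (hS : S ≠ nil) (hT : T ≠ nil)
    (hge : ∀ j, depthCountGe j S ≤ depthCountGe j T) (hpl : T.pathLength ≤ S.pathLength)
    (j : ℕ) : depthCount j S = depthCount j T := by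
  have hsucc : ∀ j, depthCountGe (j + 1) S = depthCountGe (j + 1) T := by
    set N := S.size + T.size
    have hsum : ∑ j ∈ Finset.range N, depthCountGe (j + 1) S =
        ∑ j ∈ Finset.range N, depthCountGe (j + 1) T := by
      refine le_antisymm (Finset.sum_le_sum fun j _ => hge (j + 1)) ?_
      rwa [← pathLength_eq_sum_depthCountGe (depthCountGe_eq_zero_of_size_le (by omega)),
        ← pathLength_eq_sum_depthCountGe (depthCountGe_eq_zero_of_size_le (by omega))]
    intro j
    rcases lt_or_ge j N with hj | hj
    · exact (Finset.sum_eq_sum_iff_of_le fun j _ => hge (j + 1)).1 hsum j (Finset.mem_range.2 hj)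
    · rw [depthCountGe_eq_zero_of_size_le (by omega), depthCountGe_eq_zero_of_size_le (by omega)]
  cases j with
  | zero => rw [depthCount_zero_of_ne_nil hS, depthCount_zero_of_ne_nil hT]
  | succ j =>
    have hS' := depthCountGe_eq_add S (j + 1)
    have hT' := depthCountGe_eq_add T (j + 1)
    have := hsucc j
    have := hsucc (j + 1)
    omega

/-- The tree that is complete down to depth `m - 1` and has `x ≤ t ^ m` nodes at depth `m`,
packed to the left. -/
def packed : ℕ → ℕ → TAry t
  | 0, x => if x = 0 then nil else node fun _ => nil
  | m + 1, x => node fun i => packed m (min (t ^ m) (x - (i : ℕ) * t ^ m))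

theorem depthCount_packed {m x : ℕ} (hx : x ≤ t ^ m) (j : ℕ) :
    depthCount j (packed m x : TAry t) = if j < m then t ^ j else if j = m then x else 0 := by
  induction m generalizing x j with
  | zero =>
    rw [pow_zero] at hx
    interval_cases x <;> cases j <;> simp [packed, depthCount]
  | succ m ih =>
    cases j with
    | zero => simp [packed, depthCount]
    | succ j =>
      simp only [packed, depthCount, ih (min_le_left _ _)]
      rcases lt_trichotomy j m with h | rfl | h
      · simp [h, pow_succ']
      · simp [Fin.sum_min_sub_mul (pow_succ' t j ▸ hx)]
      · simp [h.ne', h.not_gt]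

theorem depthCountGe_packed_of_le {m x j : ℕ} (hx : x ≤ t ^ m) (hj : j ≤ m) :
    depthCountGe j (packed m x : TAry t) = x + ∑ i ∈ Finset.Ico j m, t ^ i := by
  have htop : depthCountGe (m + 1) (packed m x : TAry t) = 0 :=
    depthCountGe_eq_zero_of_depthCount_eq_zero (by simp [depthCount_packed hx])
  rw [depthCountGe_eq_sum_Ico_add _ (hj.trans m.le_succ), htop, Finset.sum_Ico_succ_top hj,
    depthCount_packed hx, Finset.sum_congr rfl fun i hi => by
      rw [depthCount_packed hx, if_pos (Finset.mem_Ico.1 hi).2]]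
  simp [add_comm]

theorem depthCountGe_packed_of_lt {m x j : ℕ} (hx : x ≤ t ^ m) (hj : m < j) :
    depthCountGe j (packed m x : TAry t) = 0 :=
  depthCountGe_eq_zero_of_depthCount_eq_zero (by simp [depthCount_packed hx, hj.not_gt, hj.ne'])

theorem depthCountGe_packed_le {m a ℓ r : ℕ} (hr : r < t - 1) (ha : a ≤ t ^ m)
    (h : (t - 1) * a + t ^ m = t * ℓ + r) {T : TAry t} (hT : T.leaves = ℓ) (j : ℕ) :
    depthCountGe j (packed m a : TAry t) ≤ depthCountGe j T := by
  rcases le_or_gt j m with hj | hj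
  · rw [depthCountGe_packed_of_le ha hj]
    have hkraft := mul_leaves_le T j
    have hgeom := Nat.sub_one_mul_sum_Ico_pow_add_pow (t := t) (by omega) hj
    rw [hT] at hkraft
    -- `(t - 1) (a + ∑) = t ℓ + r - t ^ j ≤ (t - 1) d_j + r < (t - 1) (d_j + 1)`
    refine Nat.lt_succ_iff.1 (Nat.lt_of_mul_lt_mul_left (a := t - 1) ?_)
    rw [Nat.mul_add, Nat.mul_succ]
    omega
  · rw [depthCountGe_packed_of_lt ha hj]
    exact Nat.zero_le _

theorem leaves_packed_zero {y : ℕ} (hy : y ≤ 1) : (packed 0 y : TAry t).leaves = y := by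
  interval_cases y <;> simp [packed, leaves]

theorem one_le_leaves_packed_succ (m x : ℕ) : 1 ≤ (packed (m + 1) x : TAry t).leaves :=
  le_max_left _ _

/-- Its leaves are the `x` nodes at depth `m + 1` and the nodes at depth `m` other than the
`⌈x / t⌉` that have children. -/
theorem leaves_packed_succ (ht : 0 < t) {m x : ℕ} (hx : x ≤ t ^ (m + 1)) :
    (packed (m + 1) x : TAry t).leaves + (x + (t - 1)) / t = x + t ^ m := by
  induction m generalizing x with
  | zero =>
    rw [zero_add, pow_one] at hx
    rw [packed.eq_2, leaves]
    simp only [pow_zero]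
    rw [Finset.sum_congr rfl fun i _ => leaves_packed_zero (min_le_left _ _),
      Fin.sum_min_sub_mul (by rwa [mul_one])]
    rcases Nat.eq_zero_or_pos x with rfl | hpos
    · simp [Nat.div_eq_of_lt (Nat.sub_lt ht one_pos)]
    · rw [max_eq_right hpos, Nat.div_eq_of_lt_le (k := 1) (by omega) (by omega)]
  | succ m ih =>
    have hceil : ∀ y, (y + t ^ (m + 1)) / t = y / t + t ^ m := fun y => by
      rw [pow_succ, Nat.add_mul_div_right _ _ ht]
    set c := t ^ (m + 1)
    have hxc : x ≤ t * c := by rwa [← pow_succ']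
    have hsplit : ∑ i : Fin t, (min c (x - (i : ℕ) * c) + (t - 1)) / t = (x + (t - 1)) / t := by
      rw [Fin.sum_univ_eq_sum_range (fun i => (min c (x - i * c) + (t - 1)) / t)]
      refine Nat.sum_range_map_min_sub_mul (fun y => (y + (t - 1)) / t) c
        (by rw [zero_add]; exact Nat.div_eq_of_lt (Nat.sub_lt ht one_pos)) (fun y => ?_) hxc
      rw [show c + y + (t - 1) = y + (t - 1) + c by ring, add_comm c, hceil, hceil,
        Nat.div_eq_of_lt (Nat.sub_lt ht one_pos), zero_add, add_comm]
    have hchildren := Finset.sum_congr rfl fun (i : Fin t) (_ : i ∈ Finset.univ) =>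
      ih (x := min c (x - (i : ℕ) * c)) (min_le_left _ _)
    rw [Finset.sum_add_distrib, Finset.sum_add_distrib, hsplit, Fin.sum_min_sub_mul hxc]
      at hchildren
    have hpos : 1 ≤ ∑ i : Fin t, (packed (m + 1) (min c (x - (i : ℕ) * c)) : TAry t).leaves :=
      (one_le_leaves_packed_succ _ _).trans (Finset.single_le_sum
        (f := fun i : Fin t => (packed (m + 1) (min c (x - (i : ℕ) * c)) : TAry t).leaves)
        (fun i _ => Nat.zero_le _) (Finset.mem_univ ⟨0, ht⟩))
    rw [packed, leaves, max_eq_right hpos]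
    simp only [c, pow_succ', Finset.sum_const, Finset.card_univ, Fintype.card_fin, smul_eq_mul]
      at hchildren ⊢
    omega

theorem leaves_packed_eq {m a ℓ r : ℕ} (hr : r < t - 1) (ha : a ≤ t ^ m)
    (h : (t - 1) * a + t ^ m = t * ℓ + r) : (packed m a : TAry t).leaves = ℓ := by
  cases m with
  | zero =>
    have ht : 2 ≤ t := by omega
    rw [pow_zero] at ha h
    rw [leaves_packed_zero ha]
    interval_cases a
    · rcases Nat.eq_zero_or_pos ℓ with rfl | hℓ
      · rfl
      · nlinarith
    · rw [mul_one, Nat.sub_add_cancel (by omega)] at h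
      obtain _ | _ | ℓ := ℓ
      · omega
      · rfl
      · nlinarith
  | succ m =>
    rw [pow_succ'] at h ha
    have hℓ : ℓ ≤ a + t ^ m := by
      refine Nat.le_of_mul_le_mul_left ?_ (by omega : 0 < t)
      rw [Nat.mul_add]
      nlinarith [Nat.sub_le t 1]
    have hq : (a + t ^ m - ℓ) * t = a + r := by
      have : (t - 1) * a + a = t * a := by
        rw [← Nat.succ_mul, Nat.succ_eq_add_one, Nat.sub_add_cancel (by omega)]
      rw [Nat.mul_comm, Nat.mul_sub, Nat.mul_add]
      omega
    have hleaves := leaves_packed_succ (t := t) (by omega) (pow_succ' t m ▸ ha)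
    rw [Nat.div_eq_of_lt_le (k := a + t ^ m - ℓ) (by omega) (by rw [Nat.succ_mul]; omega)]
      at hleaves
    omega

end TAry

open TAry in
/-- A `t`-ary tree of minimal path length among trees with `ℓ` leaves has profile
`D_j = t^j` for `j < m`, `D_m = ℓ₁ = ℓ - ⌊(t^m - ℓ)/(t-1)⌋`, `D_j = 0` for `j > m`,
with `m = ⌈log_t ℓ⌉`; in particular all its leaves are at depth `m` or `m-1`. -/
theorem stmt16 (t ℓ : ℕ) (ht : 2 ≤ t) (hℓ : 1 ≤ ℓ) (T : TAry t) (hT : T.leaves = ℓ)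
    (hmin : ∀ T' : TAry t, T'.leaves = ℓ → T.pathLength ≤ T'.pathLength) :
    (∀ j < Nat.clog t ℓ, TAry.depthCount j T = t ^ j) ∧
    TAry.depthCount (Nat.clog t ℓ) T = ℓ - (t ^ Nat.clog t ℓ - ℓ) / (t - 1) ∧
    (∀ j, Nat.clog t ℓ < j → TAry.depthCount j T = 0) ∧
    (∀ j, TAry.leavesAt j T ≠ 0 → j = Nat.clog t ℓ ∨ j = Nat.clog t ℓ - 1) := by
  obtain ⟨r, hr, hrow⟩ := Nat.exists_sub_one_mul_add_pow_clog_eq ht hℓ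
  set m := Nat.clog t ℓ
  set a := ℓ - (t ^ m - ℓ) / (t - 1)
  have ha : a ≤ t ^ m := (Nat.sub_le _ _).trans (Nat.le_pow_clog ht ℓ)
  have hpacked : (packed m a : TAry t).leaves = ℓ := leaves_packed_eq hr ha hrow
  have hprofile (j : ℕ) : depthCount j T = if j < m then t ^ j else if j = m then a else 0 := by
    rw [← depthCount_packed ha j]
    exact (depthCount_eq_of_depthCountGe_le (ne_nil_of_leaves_pos (by omega))
      (ne_nil_of_leaves_pos (by omega)) (depthCountGe_packed_le hr ha hrow hT)
      (hmin _ hpacked) j).symm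
  refine ⟨fun j hj => by simp [hprofile, hj], by simp [hprofile],
    fun j hj => by simp [hprofile, hj.not_gt, hj.ne'], fun j hj => ?_⟩
  by_contra hmj
  refine hj (leavesAt_eq_zero_of_mul_depthCount_le (by omega) ?_)
  rw [hprofile, hprofile]
  split_ifs <;> first | omega | simp [pow_succ']
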